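/- arXiv:1506.05451 — 2 statements merged into one kernel-verified Lean document; each statement's English description precedes it below -/
import Mathlib

section
/- Let f be an unbounded modulus, λ ∈ Λ, and (x_t) a sequence in a normed space X. If there exists T ⊆ ℕ with f_λ-density zero such that x_t → x along ℕ\T, then (x_t) is f_λ-statistically convergent to x. -/
open Filter Finset Topology
open scoped Classical

def IsModulus (f : ℝ → ℝ) : Prop :=
  (∀ x, 0 ≤ x → 0 ≤ f x) ∧
  (∀ x, 0 ≤ x → (f x = 0 ↔ x = 0)) ∧
  (∀ x, 0 ≤ x → ∀ y, 0 ≤ y → f (x + y) ≤ f x + f y) ∧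
  (∀ x y, 0 ≤ x → x ≤ y → f x ≤ f y) ∧
  ContinuousWithinAt f (Set.Ici 0) 0

def IsUnboundedModulus (f : ℝ → ℝ) : Prop :=
  IsModulus f ∧ ∀ M : ℝ, ∃ x, 0 ≤ x ∧ M < f x

def MemLambda (l : ℕ → ℝ) : Prop :=
  l 1 = 1 ∧ Monotone l ∧ (∀ n, l (n + 1) ≤ l n + 1) ∧ (∀ n, 0 < l n) ∧
  Tendsto l atTop atTop

noncomputable def Iseg (l : ℕ → ℝ) (n : ℕ) : Finset ℕ :=
  (Finset.Icc 1 n).filter (fun t => (n : ℝ) - l n + 1 ≤ (t : ℝ))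

def FLStatConv {X : Type*} [NormedAddCommGroup X] (f : ℝ → ℝ) (l : ℕ → ℝ)
    (x : ℕ → X) (L : X) : Prop :=
  ∀ ξ : ℝ, 0 < ξ →
    Tendsto (fun n => f (((Iseg l n).filter (fun t => ξ ≤ ‖x t - L‖)).card) / f (l n))
      atTop (nhds 0)

def FLDensityZero (f : ℝ → ℝ) (l : ℕ → ℝ) (T : Set ℕ) : Prop :=
  Tendsto (fun n => f (((Iseg l n).filter (fun t => t ∈ T)).card) / f (l n))
    atTop (nhds 0)

def FStatConv {X : Type*} [NormedAddCommGroup X] (f : ℝ → ℝ)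
    (x : ℕ → X) (L : X) : Prop :=
  ∀ ξ : ℝ, 0 < ξ →
    Tendsto (fun u => f (((Finset.Icc 1 u).filter (fun t => ξ ≤ ‖x t - L‖)).card) / f (u : ℝ))
      atTop (nhds 0)

/-!
Outside `T` the sequence eventually stays within `ξ` of `x`, so the set where `‖x_t - x‖ ≥ ξ`
lies in `T` up to a finite set `F`. By monotonicity and subadditivity of `f`, its counting
ratio on `I_n` is at most that of `T` plus `f |F| / f (λ_n)`, and the last term tends to `0`
because `f` is unbounded and `λ_n → ∞`.
-/

namespace IsModulus

variable {f : ℝ → ℝ}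

lemma pos (hf : IsModulus f) {x : ℝ} (hx : 0 < x) : 0 < f x :=
  (hf.1 x hx.le).lt_of_ne fun h => hx.ne' ((hf.2.1 x hx.le).mp h.symm)

lemma le_add_of_le_add (hf : IsModulus f) {a b c : ℝ} (ha : 0 ≤ a) (hb : 0 ≤ b) (hc : 0 ≤ c)
    (h : c ≤ a + b) : f c ≤ f a + f b :=
  (hf.2.2.2.1 c (a + b) hc h).trans (hf.2.2.1 a ha b hb)

end IsModulus

lemma IsUnboundedModulus.tendsto_atTop_comp {f : ℝ → ℝ} (hf : IsUnboundedModulus f)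
    {α : Type*} {F : Filter α} {g : α → ℝ} (hg : Tendsto g F atTop) :
    Tendsto (fun a => f (g a)) F atTop := by
  refine tendsto_atTop.mpr fun M => ?_
  obtain ⟨y, hy0, hy⟩ := hf.2 M
  filter_upwards [hg.eventually_ge_atTop y] with a ha
  exact hy.le.trans (hf.1.2.2.2.1 y (g a) hy0 ha)

lemma card_filter_le_card_filter_add_card {s F : Finset ℕ} {S T : Set ℕ}
    (hST : S \ T ⊆ F) :
    ((s.filter (· ∈ S)).card : ℝ) ≤ (s.filter (· ∈ T)).card + F.card := by
  have hsub : s.filter (· ∈ S) ⊆ s.filter (· ∈ T) ∪ F := by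
    intro t ht
    rw [mem_filter] at ht
    by_cases htT : t ∈ T
    · exact mem_union_left _ (mem_filter.mpr ⟨ht.1, htT⟩)
    · exact mem_union_right _ (hST ⟨ht.2, htT⟩)
  exact_mod_cast (card_le_card hsub).trans (card_union_le _ _)

lemma FLDensityZero.of_diff_finite {f : ℝ → ℝ} (hf : IsUnboundedModulus f) {l : ℕ → ℝ}
    (hl : MemLambda l) {S T : Set ℕ} (hT : FLDensityZero f l T) (hST : (S \ T).Finite) :
    FLDensityZero f l S := by
  set F := hST.toFinset
  have hfl : ∀ n, 0 < f (l n) := fun n => hf.1.pos (hl.2.2.2.1 n)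
  have hbound : ∀ n, f ((Iseg l n).filter (· ∈ S)).card / f (l n) ≤
      f ((Iseg l n).filter (· ∈ T)).card / f (l n) + f F.card / f (l n) := fun n => by
    rw [← add_div, div_le_div_iff_of_pos_right (hfl n)]
    exact hf.1.le_add_of_le_add (Nat.cast_nonneg _) (Nat.cast_nonneg _) (Nat.cast_nonneg _)
      (card_filter_le_card_filter_add_card hST.coe_toFinset.ge)
  have hfinite : Tendsto (fun n => f F.card / f (l n)) atTop (𝓝 0) :=
    tendsto_const_nhds.div_atTop (hf.tendsto_atTop_comp hl.2.2.2.2)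
  refine squeeze_zero (fun n => div_nonneg (hf.1.1 _ (Nat.cast_nonneg _)) (hfl n).le) hbound ?_
  simpa using hT.add hfinite

lemma finite_le_dist_diff_of_tendsto_inf_principal {X : Type*} [PseudoMetricSpace X]
    {xs : ℕ → X} {x : X} {T : Set ℕ} (hconv : Tendsto xs (atTop ⊓ 𝓟 Tᶜ) (𝓝 x))
    {ξ : ℝ} (hξ : 0 < ξ) : ({t | ξ ≤ dist (xs t) x} \ T).Finite := by
  have hev := Metric.tendsto_nhds.mp hconv ξ hξ
  rw [eventually_inf_principal, ← Nat.cofinite_eq_atTop, eventually_cofinite] at hev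
  exact hev.subset fun t ht h => (h ht.2).not_ge ht.1

theorem stmt8_general {X : Type*} [NormedAddCommGroup X]
    (f : ℝ → ℝ) (hf : IsUnboundedModulus f)
    (l : ℕ → ℝ) (hl : MemLambda l) (xs : ℕ → X) (x : X)
    (T : Set ℕ) (hT : FLDensityZero f l T)
    (hconv : Tendsto xs (atTop ⊓ Filter.principal Tᶜ) (nhds x)) :
    FLStatConv f l xs x := by
  intro ξ hξ
  have hS : FLDensityZero f l {t | ξ ≤ dist (xs t) x} :=
    hT.of_diff_finite hf hl (finite_le_dist_diff_of_tendsto_inf_principal hconv hξ)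
  simpa only [FLDensityZero, Set.mem_ofPred_eq, dist_eq_norm] using hS

theorem stmt8 {X : Type*} [NormedAddCommGroup X] [NormedSpace ℝ X]
    (f : ℝ → ℝ) (hf : IsUnboundedModulus f)
    (l : ℕ → ℝ) (hl : MemLambda l) (xs : ℕ → X) (x : X)
    (T : Set ℕ) (hT : FLDensityZero f l T)
    (hconv : Tendsto xs (atTop ⊓ Filter.principal Tᶜ) (nhds x)) :
    FLStatConv f l xs x :=
  stmt8_general f hf l hl xs x T hT hconv
end

section
/- Let f and g be unbounded moduli, X a normed space, and (x_t) a sequence in X. If (x_t) is f-statistically convergent to x and g-statistically convergent to y, then x = y. -/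
open Filter Finset Topology
open scoped Classical

/-! If `x ≠ y`, every term lies at distance at least `‖x - y‖ / 2` from `x` or from `y`, so for each
`u` one of the two exceptional sets in `[1, u]` has at least `u / 2` elements. Subadditivity and
monotonicity give `f u ≤ 2 f (u / 2)`, so for every `u ≥ 1` one of the ratios `f (#A) / f u`,
`g (#B) / g u` is at least `1 / 2`, whereas both tend to `0`. -/

lemma IsModulus.pos_s19 {f : ℝ → ℝ} (hf : IsModulus f) {u : ℝ} (hu : 0 < u) : 0 < f u :=
  (hf.1 u hu.le).lt_of_ne fun h => hu.ne' ((hf.2.1 u hu.le).mp h.symm)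

lemma IsModulus.le_two_mul_half {f : ℝ → ℝ} (hf : IsModulus f) {u : ℝ} (hu : 0 ≤ u) :
    f u ≤ 2 * f (u / 2) := by
  have := hf.2.2.1 (u / 2) (by positivity) (u / 2) (by positivity)
  rw [add_halves] at this
  linarith

lemma IsModulus.half_le_div {f : ℝ → ℝ} (hf : IsModulus f) {u c : ℝ} (hu : 0 < u)
    (hc : u ≤ 2 * c) : 1 / 2 ≤ f c / f u := by
  have hmono : f (u / 2) ≤ f c := hf.2.2.2.1 (u / 2) c (by positivity) (by linarith)
  rw [le_div_iff₀ (hf.pos_s19 hu)]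
  linarith [hf.le_two_mul_half hu.le]

lemma Finset.card_le_card_filter_add_card_filter {α : Type*} (s : Finset α) (p q : α → Prop)
    [DecidablePred p] [DecidablePred q] (h : ∀ a ∈ s, p a ∨ q a) :
    #s ≤ #(s.filter p) + #(s.filter q) := by
  classical
  calc #s = #(s.filter fun a => p a ∨ q a) := by rw [Finset.filter_true_of_mem h]
    _ = #(s.filter p ∪ s.filter q) := by rw [Finset.filter_or]
    _ ≤ _ := Finset.card_union_le _ _

lemma half_norm_sub_le_or {X : Type*} [SeminormedAddCommGroup X] (x y z : X) :
    ‖x - y‖ / 2 ≤ ‖z - x‖ ∨ ‖x - y‖ / 2 ≤ ‖z - y‖ := by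
  have := dist_triangle_left x y z
  simp only [dist_eq_norm] at this
  by_contra! h
  linarith [h.1, h.2]

theorem stmt19_general {X : Type*} [NormedAddCommGroup X]
    (f g : ℝ → ℝ) (hf : IsUnboundedModulus f) (hg : IsUnboundedModulus g)
    (xs : ℕ → X) (x y : X)
    (hx : FStatConv f xs x) (hy : FStatConv g xs y) : x = y := by
  by_contra hxy
  set ξ := ‖x - y‖ / 2
  have hξ : 0 < ξ := by positivity [sub_ne_zero.mpr hxy]
  obtain ⟨u, ⟨hfu, hgu⟩, hu⟩ := (((hx ξ hξ).eventually_lt_const one_half_pos).and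
    ((hy ξ hξ).eventually_lt_const one_half_pos) |>.and (eventually_ge_atTop 1)).exists
  set A := (Icc 1 u).filter fun t => ξ ≤ ‖xs t - x‖
  set B := (Icc 1 u).filter fun t => ξ ≤ ‖xs t - y‖
  have hcover : (u : ℝ) ≤ #A + #B := by
    have := card_le_card_filter_add_card_filter (Icc 1 u) _ _
      fun t _ => half_norm_sub_le_or x y (xs t)
    rw [Nat.card_Icc, Nat.add_sub_cancel] at this
    exact_mod_cast this
  have hu : (0 : ℝ) < u := by exact_mod_cast hu
  rcases le_total (u : ℝ) (2 * #A) with hA | hA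
  · linarith [hf.1.half_le_div hu hA]
  · linarith [hg.1.half_le_div hu (c := #B) (by linarith)]

theorem stmt19 {X : Type*} [NormedAddCommGroup X] [NormedSpace ℝ X]
    (f g : ℝ → ℝ) (hf : IsUnboundedModulus f) (hg : IsUnboundedModulus g)
    (xs : ℕ → X) (x y : X)
    (hx : FStatConv f xs x) (hy : FStatConv g xs y) : x = y :=
  stmt19_general f g hf hg xs x y hx hy
end
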